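/- arXiv:2307.08053 — 3 statements merged into one kernel-verified Lean document; each statement's English description precedes it below -/
import Mathlib

section
/- Let C ⊆ GF(q)^n be a linear code with d(C^⊥) ≥ 3, and let u ∈ GF(q)^n with u ∉ C^⊥. Then: (1) d(C̄(u)^⊥) ≥ 2; (2) d(C̄(u)^⊥) = 2 if and only if there exist a ∈ GF(q)* and an index j with u + a·e_j ∈ C^⊥, where e_j is the j-th standard basis vector; (3) the number of codewords of weight 2 in C̄(u)^⊥ is either 0 or q-1. -/
open Finset
set_option linter.unusedSectionVars false
set_option linter.unusedVariables false
set_option maxHeartbeats 1000000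

variable {F : Type*} [Field F] [Fintype F] [DecidableEq F]

/-- The extended code of `C` by the vector `u`: append the coordinate `∑ uᵢ cᵢ`. -/
def extCode {n : ℕ} (C : Submodule F (Fin n → F)) (u : Fin n → F) :
    Submodule F (Fin (n + 1) → F) where
  carrier := {x | (fun i => x i.castSucc) ∈ C ∧
    x (Fin.last n) = ∑ i, u i * x i.castSucc}
  add_mem' := by
    rintro a b ⟨ha, ha'⟩ ⟨hb, hb'⟩
    refine ⟨C.add_mem ha hb, ?_⟩
    simp only [Pi.add_apply, ha', hb', mul_add, Finset.sum_add_distrib]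
  zero_mem' := ⟨C.zero_mem, by simp⟩
  smul_mem' := by
    rintro a x ⟨hx, hx'⟩
    refine ⟨C.smul_mem a hx, ?_⟩
    simp only [Pi.smul_apply, smul_eq_mul, hx', Finset.mul_sum]
    exact Finset.sum_congr rfl fun i _ => by ring

/-- The (Euclidean) dual code. -/
def dualCode {n : ℕ} (C : Submodule F (Fin n → F)) : Submodule F (Fin n → F) where
  carrier := {x | ∀ c ∈ C, ∑ i, x i * c i = 0}
  add_mem' := by
    intro a b ha hb c hc
    simp only [Pi.add_apply, add_mul, Finset.sum_add_distrib, ha c hc, hb c hc, add_zero]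
  zero_mem' := by intro c hc; simp
  smul_mem' := by
    intro a x hx c hc
    simp only [Pi.smul_apply, smul_eq_mul, mul_assoc, ← Finset.mul_sum, hx c hc, mul_zero]

/-- Minimum (Hamming) distance of a linear code: least weight of a nonzero codeword. -/
noncomputable def minDist {n : ℕ} (C : Submodule F (Fin n → F)) : ℕ :=
  sInf {w | ∃ c ∈ C, c ≠ 0 ∧ hammingNorm c = w}

/-- Number of codewords of Hamming weight `w`. -/
noncomputable def weightCount {n : ℕ} (C : Submodule F (Fin n → F)) (w : ℕ) : ℕ :=
  Nat.card {c : C // hammingNorm (c : Fin n → F) = w}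

lemma mem_dualCode {n : ℕ} {C : Submodule F (Fin n → F)} {x : Fin n → F} :
    x ∈ dualCode C ↔ ∀ c ∈ C, ∑ i, x i * c i = 0 := Iff.rfl

lemma hammingNorm_eq_sum {n : ℕ} (x : Fin n → F) :
    hammingNorm x = ∑ i, if x i ≠ 0 then 1 else 0 := by
  simp [hammingNorm, Finset.card_filter]

lemma hammingNorm_castSucc {n : ℕ} (x : Fin (n+1) → F) :
    hammingNorm x = hammingNorm (fun i : Fin n => x i.castSucc) +
      (if x (Fin.last n) ≠ 0 then 1 else 0) := by
  rw [hammingNorm_eq_sum, hammingNorm_eq_sum, Fin.sum_univ_castSucc]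

lemma hammingNorm_single {n : ℕ} (j : Fin n) {a : F} (ha : a ≠ 0) :
    hammingNorm (Pi.single j a : Fin n → F) = 1 := by
  rw [hammingNorm]
  rw [show ({i | (Pi.single j a : Fin n → F) i ≠ 0} : Finset (Fin n)) = {j} from ?_, card_singleton]
  ext i
  simp only [mem_filter, mem_univ, true_and, mem_singleton, Pi.single_apply]
  constructor
  · intro h; by_contra hij; simp [hij] at h
  · intro h; simp [h, ha]

lemma eq_single_of_norm_one {n : ℕ} {y : Fin n → F} (h : hammingNorm y = 1) :
    ∃ j : Fin n, ∃ c : F, c ≠ 0 ∧ y = Pi.single j c := by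
  rw [hammingNorm, Finset.card_eq_one] at h
  obtain ⟨j, hj⟩ := h
  refine ⟨j, y j, ?_, ?_⟩
  · have : j ∈ ({i | y i ≠ 0} : Finset (Fin n)) := hj ▸ mem_singleton_self j
    simpa using this
  · funext i
    rcases eq_or_ne i j with rfl | hij
    · simp
    · have : i ∉ ({i | y i ≠ 0} : Finset (Fin n)) := hj ▸ by simp [hij]
      simp only [mem_filter, mem_univ, true_and, not_not] at this
      simp [this, Pi.single_apply, hij]

lemma smul_single_one {n : ℕ} (j : Fin n) (a : F) :
    a • (Pi.single j 1 : Fin n → F) = Pi.single j a := by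
  funext i
  simp [Pi.single_apply, mul_ite]

lemma mem_dual_ext {n : ℕ} {C : Submodule F (Fin n → F)} {u : Fin n → F}
    {x : Fin (n+1) → F} :
    x ∈ dualCode (extCode C u) ↔
      ((fun i : Fin n => x i.castSucc) + x (Fin.last n) • u) ∈ dualCode C := by
  simp only [mem_dualCode]
  constructor
  · intro h c hc
    have hy : (Fin.snoc c (∑ i, u i * c i) : Fin (n+1) → F) ∈ extCode C u := by
      refine ⟨?_, ?_⟩
      · simpa [Fin.snoc_castSucc] using hc
      · simp [Fin.snoc_last, Fin.snoc_castSucc]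
    have := h _ hy
    rw [Fin.sum_univ_castSucc] at this
    simp only [Fin.snoc_castSucc, Fin.snoc_last] at this
    calc ∑ i, ((fun i : Fin n => x i.castSucc) + x (Fin.last n) • u) i * c i
        = ∑ i, (x i.castSucc * c i + x (Fin.last n) * (u i * c i)) := by
          refine Finset.sum_congr rfl fun i _ => ?_
          simp [Pi.add_apply, Pi.smul_apply, smul_eq_mul]; ring
      _ = (∑ i, x i.castSucc * c i) + x (Fin.last n) * ∑ i, u i * c i := by
          rw [Finset.sum_add_distrib, Finset.mul_sum]
      _ = 0 := this
  · intro h y hy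
    obtain ⟨hy1, hy2⟩ := hy
    have := h _ hy1
    rw [Fin.sum_univ_castSucc, hy2]
    calc (∑ i : Fin n, x i.castSucc * y i.castSucc) + x (Fin.last n) * ∑ i, u i * y i.castSucc
        = ∑ i, ((fun i : Fin n => x i.castSucc) + x (Fin.last n) • u) i * y i.castSucc := by
          rw [Finset.mul_sum, ← Finset.sum_add_distrib]
          refine Finset.sum_congr rfl fun i _ => ?_
          simp [Pi.add_apply, Pi.smul_apply, smul_eq_mul]; ring
      _ = 0 := this

/-- Structure of weight-2 vectors in the dual of the extended code. -/
lemma weight2_struct {n : ℕ} {C : Submodule F (Fin n → F)} {u : Fin n → F}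
    (hC3 : ∀ w ∈ dualCode C, w ≠ 0 → 3 ≤ hammingNorm w) (hu : u ∉ dualCode C)
    {x : Fin (n+1) → F} (hx : x ∈ dualCode (extCode C u)) (h2 : hammingNorm x = 2) :
    x (Fin.last n) ≠ 0 ∧ ∃ j : Fin n, ∃ c : F, c ≠ 0 ∧
      (fun i : Fin n => x i.castSucc) = Pi.single j c ∧
      u + ((x (Fin.last n))⁻¹ * c) • (Pi.single j 1 : Fin n → F) ∈ dualCode C := by
  rw [mem_dual_ext] at hx
  rcases eq_or_ne (x (Fin.last n)) 0 with hb | hb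
  · exfalso
    rw [hb, zero_smul, add_zero] at hx
    have hx'2 : hammingNorm (fun i : Fin n => x i.castSucc) = 2 := by
      have := hammingNorm_castSucc x
      rw [h2, hb] at this
      simpa using this.symm
    have hne : (fun i : Fin n => x i.castSucc) ≠ 0 := by
      intro h0
      rw [h0, hammingNorm_zero] at hx'2
      omega
    have := hC3 _ hx hne
    omega
  · refine ⟨hb, ?_⟩
    have hx'1 : hammingNorm (fun i : Fin n => x i.castSucc) = 1 := by
      have := hammingNorm_castSucc x
      rw [h2, if_pos hb] at this
      omega
    obtain ⟨j, c, hc, hxs⟩ := eq_single_of_norm_one hx'1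
    refine ⟨j, c, hc, hxs, ?_⟩
    have hmem := (dualCode C).smul_mem (x (Fin.last n))⁻¹ hx
    have heq : (x (Fin.last n))⁻¹ • ((fun i : Fin n => x i.castSucc) + x (Fin.last n) • u)
        = u + ((x (Fin.last n))⁻¹ * c) • (Pi.single j 1 : Fin n → F) := by
      rw [hxs]
      funext i
      simp only [Pi.smul_apply, Pi.add_apply, smul_eq_mul, Pi.single_apply]
      rcases eq_or_ne i j with rfl | hij
      · simp only [if_pos rfl, mul_one]
        field_simp
        simp only [↓reduceIte, mul_one]; ring
      · simp only [if_neg hij, mul_zero, add_zero, zero_add]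
        field_simp
    rwa [heq] at hmem

/-- Uniqueness of the pair (a, j). -/
lemma pair_unique {n : ℕ} {C : Submodule F (Fin n → F)} {u : Fin n → F}
    (hC3 : ∀ w ∈ dualCode C, w ≠ 0 → 3 ≤ hammingNorm w)
    {a a' : F} {j j' : Fin n} (ha : a ≠ 0) (ha' : a' ≠ 0)
    (h1 : u + a • (Pi.single j 1 : Fin n → F) ∈ dualCode C)
    (h2 : u + a' • (Pi.single j' 1 : Fin n → F) ∈ dualCode C) :
    a = a' ∧ j = j' := by
  set v : Fin n → F := (Pi.single j a : Fin n → F) - Pi.single j' a' with hvdef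
  have hv : v ∈ dualCode C := by
    have := (dualCode C).sub_mem h1 h2
    rwa [add_sub_add_left_eq_sub, smul_single_one, smul_single_one] at this
  have hv0 : v = 0 := by
    by_contra h0
    have h3 := hC3 _ hv h0
    have hle : hammingNorm v ≤ 2 := by
      have hsub : ({i | v i ≠ 0} : Finset (Fin n))
          ⊆ {j, j'} := by
        intro i hi
        simp only [mem_filter, mem_univ, true_and, hvdef, Pi.sub_apply,
          Pi.single_apply] at hi
        simp only [mem_insert, mem_singleton]
        by_contra hcon
        push_neg at hcon
        simp [hcon.1, hcon.2] at hi
      calc hammingNorm v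
          ≤ ({j, j'} : Finset (Fin n)).card := Finset.card_le_card hsub
        _ ≤ 2 := (Finset.card_insert_le _ _).trans (by simp)
    omega
  have hjj' : j = j' := by
    by_contra hne
    have := congrFun hv0 j
    simp [hvdef, Pi.single_apply, hne, ha] at this
  subst hjj'
  have := congrFun hv0 j
  simp only [hvdef, Pi.sub_apply, Pi.single_eq_same, Pi.zero_apply] at this
  exact ⟨sub_eq_zero.mp this, rfl⟩

/-- if `d(C^⊥) ≥ 3` and `u ∉ C^⊥` then `d((extCode C u)^⊥) ≥ 2`;
it equals `2` iff `u + a·e_j ∈ C^⊥` for some `a ≠ 0` and coordinate `j`; and the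
number of weight-2 codewords of `(extCode C u)^⊥` is `0` or `q-1`. -/
theorem stmt4 {F : Type*} [Field F] [Fintype F] [DecidableEq F] {n : ℕ}
    (C : Submodule F (Fin n → F)) (hC : 3 ≤ minDist (dualCode C))
    (u : Fin n → F) (hu : u ∉ dualCode C) :
    2 ≤ minDist (dualCode (extCode C u)) ∧
    (minDist (dualCode (extCode C u)) = 2 ↔
      ∃ a : F, a ≠ 0 ∧ ∃ j : Fin n, u + a • (Pi.single j 1 : Fin n → F) ∈ dualCode C) ∧
    (weightCount (dualCode (extCode C u)) 2 = 0 ∨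
      weightCount (dualCode (extCode C u)) 2 = Fintype.card F - 1) := by
  -- nonzero dual vectors have weight ≥ 3
  have hC3 : ∀ w ∈ dualCode C, w ≠ 0 → 3 ≤ hammingNorm w := by
    intro w hw hw0
    exact hC.trans (Nat.sInf_le ⟨w, hw, hw0, rfl⟩)
  set D := dualCode (extCode C u) with hD
  set S := {w | ∃ c ∈ D, c ≠ 0 ∧ hammingNorm c = w} with hS
  -- the dual code C⊥ contains a nonzero vector
  have hTne : {w | ∃ c ∈ dualCode C, c ≠ 0 ∧ hammingNorm c = w}.Nonempty := by
    by_contra h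
    rw [Set.not_nonempty_iff_eq_empty] at h
    rw [minDist, h, Nat.sInf_empty] at hC
    omega
  obtain ⟨w₀, w, hw, hwne, rfl⟩ := hTne
  -- S is nonempty
  have hSne : S.Nonempty := by
    refine ⟨hammingNorm (Fin.snoc w 0 : Fin (n+1) → F), Fin.snoc w 0, ?_, ?_, rfl⟩
    · rw [hD, mem_dual_ext]
      have : (fun i : Fin n => (Fin.snoc w 0 : Fin (n+1) → F) i.castSucc) = w := by
        funext i; simp [Fin.snoc_castSucc]
      rw [this]
      simp only [Fin.snoc_last, zero_smul, add_zero]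
      exact hw
    · intro h0
      apply hwne
      funext i
      have := congrFun h0 i.castSucc
      simpa [Fin.snoc_castSucc] using this
  -- every nonzero element of D has weight ≥ 2
  have hge2 : ∀ x ∈ D, x ≠ 0 → 2 ≤ hammingNorm x := by
    intro x hx hx0
    rw [hD, mem_dual_ext] at hx
    rcases eq_or_ne (x (Fin.last n)) 0 with hb | hb
    · rw [hb, zero_smul, add_zero] at hx
      have hne : (fun i : Fin n => x i.castSucc) ≠ 0 := by
        intro h0
        apply hx0
        funext i
        refine Fin.lastCases ?_ ?_ i
        · exact hb
        · intro k; exact congrFun h0 k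
      have h3 := hC3 _ hx hne
      have := hammingNorm_castSucc x
      omega
    · have hne : (fun i : Fin n => x i.castSucc) ≠ 0 := by
        intro h0
        rw [h0, zero_add] at hx
        apply hu
        have := (dualCode C).smul_mem (x (Fin.last n))⁻¹ hx
        rwa [smul_smul, inv_mul_cancel₀ hb, one_smul] at this
      have h1 : 1 ≤ hammingNorm (fun i : Fin n => x i.castSucc) :=
        Nat.one_le_iff_ne_zero.mpr (hammingNorm_ne_zero_iff.mpr hne)
      have := hammingNorm_castSucc x
      rw [if_pos hb] at this
      omega
  have hmin2 : 2 ≤ minDist D := by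
    have hmem := Nat.sInf_mem hSne
    obtain ⟨x, hx, hx0, hxw⟩ := hmem
    rw [minDist, ← hS, ← hxw]
    exact hge2 x hx hx0
  refine ⟨hmin2, ?_, ?_⟩
  · constructor
    · intro hmd
      have hmem := Nat.sInf_mem hSne
      have hmd' : sInf S = 2 := hmd
      rw [hmd'] at hmem
      obtain ⟨x, hx, hx0, hxw⟩ := hmem
      obtain ⟨hb, j, c, hc, _, hmem'⟩ := weight2_struct hC3 hu hx hxw
      exact ⟨(x (Fin.last n))⁻¹ * c, mul_ne_zero (inv_ne_zero hb) hc, j, hmem'⟩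
    · rintro ⟨a, ha, j, hj⟩
      set x : Fin (n+1) → F := Fin.snoc (Pi.single j a) 1 with hxdef
      have hxD : x ∈ D := by
        rw [hD, mem_dual_ext]
        have h1 : (fun i : Fin n => x i.castSucc) = Pi.single j a := by
          funext i; simp [hxdef, Fin.snoc_castSucc]
        have h2 : x (Fin.last n) = 1 := by simp [hxdef, Fin.snoc_last]
        rw [h1, h2, one_smul, add_comm, ← smul_single_one]
        exact hj
      have hxnorm : hammingNorm x = 2 := by
        have h1 : (fun i : Fin n => x i.castSucc) = Pi.single j a := by
          funext i; simp [hxdef, Fin.snoc_castSucc]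
        have h2 : x (Fin.last n) = 1 := by simp [hxdef, Fin.snoc_last]
        rw [hammingNorm_castSucc, h1, h2, hammingNorm_single j ha, if_pos one_ne_zero]
      have hxne : x ≠ 0 := by
        intro h0
        have := congrFun h0 (Fin.last n)
        simp [hxdef, Fin.snoc_last] at this
      have hle : minDist D ≤ 2 := Nat.sInf_le ⟨x, hxD, hxne, hxnorm⟩
      omega
  · by_cases hex : ∃ a : F, a ≠ 0 ∧ ∃ j : Fin n,
        u + a • (Pi.single j 1 : Fin n → F) ∈ dualCode C
    · right
      obtain ⟨a, ha, j, hj⟩ := hex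
      -- every weight-2 codeword is determined by its last coordinate
      have hdet : ∀ x : Fin (n+1) → F, x ∈ D → hammingNorm x = 2 →
          x (Fin.last n) ≠ 0 ∧ x = Fin.snoc (Pi.single j (x (Fin.last n) * a)) (x (Fin.last n)) := by
        intro x hx h2
        obtain ⟨hb, j', c', hc', hsingle, hmem'⟩ := weight2_struct hC3 hu hx h2
        obtain ⟨haeq, hjeq⟩ := pair_unique hC3 (mul_ne_zero (inv_ne_zero hb) hc') ha hmem' hj
        subst hjeq
        have hceq : c' = x (Fin.last n) * a := by
          field_simp at haeq
          rw [haeq]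
        refine ⟨hb, ?_⟩
        funext i
        refine Fin.lastCases ?_ ?_ i
        · simp [Fin.snoc_last]
        · intro k
          rw [Fin.snoc_castSucc]
          have := congrFun hsingle k
          rw [this, hceq]
      set f : {c : D // hammingNorm (c : Fin (n+1) → F) = 2} → Fˣ :=
        fun x => Units.mk0 (x.1.1 (Fin.last n)) (hdet x.1.1 x.1.2 x.2).1 with hf
      have hbij : Function.Bijective f := by
        constructor
        · rintro ⟨⟨x, hxD⟩, hx2⟩ ⟨⟨y, hyD⟩, hy2⟩ hfeq
          have hlast : x (Fin.last n) = y (Fin.last n) := by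
            have := congrArg Units.val hfeq
            simpa [hf] using this
          have hx' := (hdet x hxD hx2).2
          have hy' := (hdet y hyD hy2).2
          refine Subtype.ext (Subtype.ext ?_)
          show x = y
          rw [hx', hy', hlast]
        · intro b
          set x : Fin (n+1) → F := Fin.snoc (Pi.single j (b.1 * a)) b.1 with hxdef
          have h1 : (fun i : Fin n => x i.castSucc) = Pi.single j (b.1 * a) := by
            funext i; simp [hxdef, Fin.snoc_castSucc]
          have h2 : x (Fin.last n) = b.1 := by simp [hxdef, Fin.snoc_last]
          have hxD : x ∈ D := by
            rw [hD, mem_dual_ext, h1, h2]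
            have heq : (Pi.single j (b.1 * a) : Fin n → F) + b.1 • u
                = b.1 • (u + a • (Pi.single j 1 : Fin n → F)) := by
              funext i
              simp only [Pi.add_apply, Pi.smul_apply, smul_eq_mul, Pi.single_apply]
              rcases eq_or_ne i j with rfl | hij
              · simp; ring
              · simp [hij]
            rw [heq]
            exact (dualCode C).smul_mem _ hj
          have hxnorm : hammingNorm x = 2 := by
            rw [hammingNorm_castSucc, h1, h2,
              hammingNorm_single j (mul_ne_zero b.ne_zero ha), if_pos b.ne_zero]
          refine ⟨⟨⟨x, hxD⟩, hxnorm⟩, ?_⟩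
          apply Units.ext
          simp [hf, h2]
      rw [weightCount, Nat.card_eq_of_bijective f hbij, Nat.card_eq_fintype_card,
        Fintype.card_units]
    · left
      rw [weightCount]
      have : IsEmpty {c : D // hammingNorm (c : Fin (n+1) → F) = 2} := by
        constructor
        rintro ⟨⟨x, hxD⟩, hx2⟩
        obtain ⟨hb, j, c, hc, _, hmem'⟩ := weight2_struct hC3 hu hxD hx2
        exact hex ⟨(x (Fin.last n))⁻¹ * c, mul_ne_zero (inv_ne_zero hb) hc, j, hmem'⟩
      exact Nat.card_of_isEmpty
end

section
/- Let q be a prime power, m ≥ 2 even, and n a divisor of q^m - 1 with n > q^{m/2} + 1. Let α ∈ GF(q^m) be a primitive n-th root of unity and C the cyclic code of length n over GF(q) with generator polynomial lcm(M_α(x), M_{α^{q^{m/2}+1}}(x)). Then d(C) ≥ 3 and d(C̄(-1)) ≥ 4; moreover if d(C) = 3 then d(C̄(-1)) = 4. -/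
open Finset

variable {F : Type*} [Field F] [Fintype F] [DecidableEq F]

lemma four_s_lt (q s n : ℕ) (hq : 2 ≤ q) (hs : 1 ≤ s)
    (hdvd : n ∣ q ^ (2*s) - 1) (hbig : q ^ s + 1 < n) : 4 * s < n := by
  have hq1 : 1 ≤ q ^ (2*s) - 1 := by
    have h1 : 2 ^ (2*s) ≤ q ^ (2*s) := Nat.pow_le_pow_left hq _
    have h2 : 2 ≤ 2 ^ (2*s) := by
      calc 2 = 2^1 := rfl
      _ ≤ 2 ^ (2*s) := Nat.pow_le_pow_right (by norm_num) (by omega)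
    omega
  have hle : n ≤ q ^ (2*s) - 1 := Nat.le_of_dvd (by omega) hdvd
  by_cases h : 4 * s < q ^ s + 2
  · omega
  · push_neg at h
    have h2 : 2 ^ s ≤ q ^ s := Nat.pow_le_pow_left hq _
    have hs3 : s ≤ 3 := by
      by_contra hs4
      push_neg at hs4
      have key : ∀ t, 4 ≤ t → 4 * t < 2 ^ t + 2 := by
        intro t ht
        induction t with
        | zero => omega
        | succ m ih =>
          rcases Nat.lt_or_ge m 4 with hm | hm
          · interval_cases m <;> simp_all
          · have := ih (by omega)
            have h4 : 4 ≤ 2 ^ m := by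
              calc (4:ℕ) = 2^2 := rfl
              _ ≤ 2^m := Nat.pow_le_pow_right (by norm_num) (by omega)
            rw [pow_succ]
            omega
      have := key s (by omega)
      omega
    interval_cases s
    · have : q = 2 := by simp only [pow_one] at h; omega
      subst this
      norm_num at hdvd hbig hle ⊢
      omega
    · have hq2 : q = 2 := by
        by_contra hq3
        have h3 : 3 ^ 2 ≤ q ^ 2 := Nat.pow_le_pow_left (by omega) _
        norm_num at h3; omega
      subst hq2
      norm_num at hdvd hbig hle ⊢
      interval_cases n <;> revert hdvd <;> decide
    · have hq2 : q = 2 := by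
        by_contra hq3
        have h3 : 3 ^ 3 ≤ q ^ 3 := Nat.pow_le_pow_left (by omega) _
        norm_num at h3; omega
      subst hq2
      norm_num at hdvd hbig hle ⊢
      interval_cases n <;> revert hdvd <;> decide

lemma mem_extCode {n : ℕ} {C : Submodule F (Fin n → F)} {u : Fin n → F} {x : Fin (n+1) → F} :
    x ∈ extCode C u ↔ ((fun i => x i.castSucc) ∈ C ∧
      x (Fin.last n) = ∑ i, u i * x i.castSucc) := Iff.rfl

lemma hammingNorm_eq_card {m : ℕ} {G : Type*} [DecidableEq G] [Zero G] (y : Fin m → G) :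
    hammingNorm y = (Finset.univ.filter fun i => y i ≠ 0).card := rfl

/-- for the cyclic code of length `n ∣ q^m - 1`, `n > q^{m/2}+1`
(`m = 2s` even) with generator polynomial `lcm(M_α, M_{α^{q^{m/2}+1}})`
(equivalently, the words vanishing at `α` and `α^{q^{m/2}+1}`), one has
`d(C) ≥ 3`, `d(C̄(-1)) ≥ 4`, and `d(C) = 3 → d(C̄(-1)) = 4`. -/
theorem stmt9 {F K : Type*} [Field F] [Fintype F] [DecidableEq F]
    [Field K] [Fintype K] [Algebra F K]
    (q s n : ℕ) (hF : Fintype.card F = q) (hs : 1 ≤ s)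
    (hK : Fintype.card K = q ^ (2 * s))
    (hdvd : n ∣ q ^ (2 * s) - 1) (hbig : q ^ s + 1 < n)
    (α : K) (hα : IsPrimitiveRoot α n)
    (C : Submodule F (Fin n → F))
    (hC : ∀ c, c ∈ C ↔
      (∑ j, algebraMap F K (c j) * α ^ (j : ℕ) = 0 ∧
       ∑ j, algebraMap F K (c j) * (α ^ (q ^ s + 1)) ^ (j : ℕ) = 0)) :
    3 ≤ minDist C ∧
    4 ≤ minDist (extCode C (fun _ => -1)) ∧
    (minDist C = 3 → minDist (extCode C (fun _ => -1)) = 4) := by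
  classical
  have hq2 : 2 ≤ q := hF ▸ Fintype.one_lt_card
  have hQ2 : 2 ≤ q ^ s := le_trans hq2 (Nat.le_self_pow (by omega) q)
  have hn0 : n ≠ 0 := by omega
  have hα0 : α ≠ 0 := hα.ne_zero hn0
  -- characteristic setup
  obtain ⟨r, hp, hqr⟩ := FiniteField.card F (ringChar F)
  rw [hF] at hqr
  haveI : Fact (ringChar F).Prime := ⟨hp⟩
  haveI : CharP K (ringChar F) := charP_of_injective_algebraMap' (A := K) F (ringChar F)
  set p := ringChar F with hpdef
  let φ : K →+* K := iterateFrobenius K p (r * s)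
  have hφ : ∀ x : K, φ x = x ^ q ^ s := by
    intro x
    show x ^ p ^ ((r : ℕ) * s) = x ^ q ^ s
    rw [pow_mul, ← hqr]
  have hφinj : Function.Injective φ := φ.injective
  have hφfix : ∀ x : F, φ (algebraMap F K x) = algebraMap F K x := by
    intro x
    rw [hφ, ← map_pow]
    congr 1
    rw [← hF]
    exact FiniteField.pow_card_pow s x
  -- core algebraic lemmas
  have main2 : ∀ a b A B : K, A ≠ 0 → B ≠ 0 → a ≠ b → b ≠ 0 → φ A = A → φ B = B →
      A * a + B * b = 0 → A * (φ a * a) + B * (φ b * b) = 0 → False := by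
    intro a b A B hA hB hab hb0 hfA hfB h1 h2
    have h1' : A * φ a + B * φ b = 0 := by
      have := congrArg φ h1
      simpa [map_add, map_mul, hfA, hfB] using this
    have key : B * φ b * (b - a) = 0 := by linear_combination h2 - a * h1'
    have hφb : φ b ≠ 0 := by
      intro h
      exact hb0 (hφinj (by simpa using h))
    rcases mul_eq_zero.mp key with h | h
    · rcases mul_eq_zero.mp h with h' | h' <;> tauto
    · exact hab (sub_eq_zero.mp h).symm
  have main3 : ∀ a b g A B G : K, A ≠ 0 → B ≠ 0 → a ≠ b → b ≠ g →
      φ A = A → φ B = B → φ G = G →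
      A + (B + G) = 0 → A * a + (B * b + G * g) = 0 →
      A * (φ a * a) + (B * (φ b * b) + G * (φ g * g)) = 0 → False := by
    intro a b g A B G hA hB hab hbg hfA hfB hfG h0 h1 h2
    have h1' : A * φ a + (B * φ b + G * φ g) = 0 := by
      have := congrArg φ h1
      simpa [map_add, map_mul, hfA, hfB, hfG] using this
    have key : B * (φ b - φ g) * (b - a) = 0 := by
      linear_combination h2 - φ g * h1 - a * h1' + a * φ g * h0
    have hne : φ b - φ g ≠ 0 := by
      rw [sub_ne_zero]
      exact fun h => hbg (hφinj h)
    rcases mul_eq_zero.mp key with h | h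
    · rcases mul_eq_zero.mp h with h' | h' <;> tauto
    · exact hab (sub_eq_zero.mp h).symm
  -- sums restricted to support
  have hsupp : ∀ (c : Fin n → F) (β : K),
      ∑ j, algebraMap F K (c j) * β ^ (j : ℕ)
        = ∑ j ∈ Finset.univ.filter (fun i => c i ≠ 0), algebraMap F K (c j) * β ^ (j : ℕ) := by
    intro c β
    refine (Finset.sum_filter_of_ne ?_).symm
    intro x _ hx hcx
    exact hx (by simp [hcx])
  have hexp : ∀ j : ℕ, (α ^ (q ^ s + 1)) ^ j = φ (α ^ j) * α ^ j := by
    intro j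
    rw [hφ, ← pow_mul, ← pow_mul, ← pow_add]
    congr 1
    ring
  have hpowne : ∀ i j : Fin n, i ≠ j → α ^ (i : ℕ) ≠ α ^ (j : ℕ) := by
    intro i j hij h
    exact hij (Fin.ext (hα.pow_inj i.isLt j.isLt h))
  have hαpow0 : ∀ j : Fin n, α ^ (j : ℕ) ≠ 0 := fun j => pow_ne_zero _ hα0
  -- weight ≥ 3 for nonzero codewords
  have hw2 : ∀ c : Fin n → F, c ∈ C → c ≠ 0 → 3 ≤ hammingNorm c := by
    intro c hc hc0
    by_contra hlt
    push_neg at hlt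
    obtain ⟨h1, h2⟩ := (hC c).1 hc
    rw [hsupp] at h1 h2
    simp only [hexp] at h2
    have hcard : (Finset.univ.filter fun i => c i ≠ 0).card = hammingNorm c :=
      (hammingNorm_eq_card c).symm
    have hpos : hammingNorm c ≠ 0 := fun h => hc0 (hammingNorm_eq_zero.mp h)
    rcases (by omega : hammingNorm c = 1 ∨ hammingNorm c = 2) with h | h
    · obtain ⟨i, hi⟩ := Finset.card_eq_one.mp (by rw [hcard, h])
      rw [hi, Finset.sum_singleton] at h1
      have hci : c i ≠ 0 := by
        have : i ∈ Finset.univ.filter fun i => c i ≠ 0 := by rw [hi]; exact Finset.mem_singleton_self i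
        exact (Finset.mem_filter.mp this).2
      exact (mul_ne_zero ((map_ne_zero _).mpr hci) (hαpow0 i)) h1
    · obtain ⟨i, j, hij, hS⟩ := Finset.card_eq_two.mp (by rw [hcard, h])
      have hci : c i ≠ 0 := by
        have : i ∈ Finset.univ.filter fun i => c i ≠ 0 := by rw [hS]; simp
        exact (Finset.mem_filter.mp this).2
      have hcj : c j ≠ 0 := by
        have : j ∈ Finset.univ.filter fun i => c i ≠ 0 := by rw [hS]; simp
        exact (Finset.mem_filter.mp this).2
      rw [hS, Finset.sum_pair hij] at h1 h2
      exact main2 (α ^ (i : ℕ)) (α ^ (j : ℕ)) _ _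
        ((map_ne_zero _).mpr hci) ((map_ne_zero _).mpr hcj)
        (hpowne i j hij) (hαpow0 j) (hφfix _) (hφfix _) h1 h2
  -- weight-3 codewords have nonzero coordinate sum
  have hw3 : ∀ c : Fin n → F, c ∈ C → hammingNorm c = 3 → ∑ i, c i = 0 → False := by
    intro c hc h3 hsum
    obtain ⟨h1, h2⟩ := (hC c).1 hc
    rw [hsupp] at h1 h2
    simp only [hexp] at h2
    have hsum' : ∑ j ∈ Finset.univ.filter (fun i => c i ≠ 0), c j = 0 :=
      (Finset.sum_filter_of_ne (fun x _ hx => hx)).trans hsum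
    have hcard : (Finset.univ.filter fun i => c i ≠ 0).card = 3 :=
      (hammingNorm_eq_card c).symm.trans h3
    obtain ⟨i, j, k, hij, hik, hjk, hS⟩ := Finset.card_eq_three.mp hcard
    have hci : c i ≠ 0 := by
      have : i ∈ Finset.univ.filter fun i => c i ≠ 0 := by rw [hS]; simp
      exact (Finset.mem_filter.mp this).2
    have hcj : c j ≠ 0 := by
      have : j ∈ Finset.univ.filter fun i => c i ≠ 0 := by rw [hS]; simp
      exact (Finset.mem_filter.mp this).2
    rw [hS] at h1 h2 hsum'
    rw [Finset.sum_insert (by simp [hij, hik]), Finset.sum_insert (by simp [hjk]),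
      Finset.sum_singleton] at h1 h2 hsum'
    have h0K : algebraMap F K (c i) + (algebraMap F K (c j) + algebraMap F K (c k)) = 0 := by
      have := congrArg (algebraMap F K) hsum'
      simpa [map_add] using this
    exact main3 (α ^ (i : ℕ)) (α ^ (j : ℕ)) (α ^ (k : ℕ)) _ _ _
      ((map_ne_zero _).mpr hci) ((map_ne_zero _).mpr hcj)
      (hpowne i j hij) (hpowne j k hjk)
      (hφfix _) (hφfix _) (hφfix _) h0K h1 h2
  -- existence of a nonzero codeword
  have hex : ∃ c : Fin n → F, c ∈ C ∧ c ≠ 0 := by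
    let f : (Fin n → F) →ₗ[F] K × K :=
      { toFun := fun c => (∑ j, algebraMap F K (c j) * α ^ (j : ℕ),
          ∑ j, algebraMap F K (c j) * (α ^ (q ^ s + 1)) ^ (j : ℕ))
        map_add' := by
          intro x y
          simp [Prod.ext_iff, add_mul, Finset.sum_add_distrib]
        map_smul' := by
          intro m x
          simp [Prod.ext_iff, Finset.mul_sum, Algebra.smul_def, mul_assoc] }
    by_contra hne
    push_neg at hne
    have hinj : Function.Injective f := by
      rw [← LinearMap.ker_eq_bot, LinearMap.ker_eq_bot']
      intro c hfc
      have hfc' : (∑ j, algebraMap F K (c j) * α ^ (j : ℕ) = 0 ∧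
          ∑ j, algebraMap F K (c j) * (α ^ (q ^ s + 1)) ^ (j : ℕ) = 0) := by
        simpa [f, Prod.ext_iff] using hfc
      exact hne c ((hC c).2 hfc')
    have hle := LinearMap.finrank_le_finrank_of_injective hinj
    have hfr : Module.finrank F K = 2 * s := by
      have hcard := Module.card_eq_pow_finrank (K := F) (V := K)
      rw [hF, hK] at hcard
      exact (Nat.pow_right_injective hq2 hcard.symm)
    rw [Module.finrank_fin_fun, Module.finrank_prod, hfr] at hle
    have := four_s_lt q s n hq2 hs hdvd hbig
    omega
  -- nonzero extended codewords have weight ≥ 4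
  have hwx : ∀ x : Fin (n+1) → F, x ∈ extCode C (fun _ => -1) → x ≠ 0 → 4 ≤ hammingNorm x := by
    intro x hx hx0
    obtain ⟨hxc, hxl⟩ := mem_extCode.mp hx
    by_cases hc0 : (fun i => x i.castSucc) = (0 : Fin n → F)
    · exfalso
      apply hx0
      funext i
      refine Fin.lastCases ?_ ?_ i
      · rw [hxl]
        simp [show ∀ j : Fin n, x j.castSucc = 0 from fun j => congrFun hc0 j]
      · intro j
        exact congrFun hc0 j
    · have h3 := hw2 (fun i : Fin n => x i.castSucc) hxc hc0
      by_contra hlt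
      push_neg at hlt
      have hsub : (Finset.univ.filter fun i => x i.castSucc ≠ 0).image Fin.castSucc ⊆
          Finset.univ.filter (fun i => x i ≠ 0) := by
        intro a ha
        simp only [Finset.mem_image, Finset.mem_filter] at ha ⊢
        obtain ⟨b, ⟨_, hb⟩, rfl⟩ := ha
        exact ⟨Finset.mem_univ _, hb⟩
      have hcardle : hammingNorm (fun i : Fin n => x i.castSucc) ≤ hammingNorm x := by
        have h := Finset.card_le_card hsub
        rw [Finset.card_image_of_injective _ (Fin.castSucc_injective n)] at h
        rw [hammingNorm_eq_card, hammingNorm_eq_card]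
        exact h
      have hxlast : x (Fin.last n) = 0 := by
        by_contra hl
        have hsub2 : insert (Fin.last n)
            ((Finset.univ.filter fun i => x i.castSucc ≠ 0).image Fin.castSucc) ⊆
            Finset.univ.filter (fun i => x i ≠ 0) := by
          intro a ha
          rcases Finset.mem_insert.mp ha with rfl | ha
          · simp [hl]
          · exact hsub ha
        have hnm : Fin.last n ∉
            (Finset.univ.filter fun i => x i.castSucc ≠ 0).image Fin.castSucc := by
          simp only [Finset.mem_image, not_exists]
          rintro b ⟨-, hb⟩
          exact absurd hb (Fin.castSucc_lt_last b).ne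
        have h4 := Finset.card_le_card hsub2
        rw [Finset.card_insert_of_notMem hnm,
          Finset.card_image_of_injective _ (Fin.castSucc_injective n)] at h4
        rw [hammingNorm_eq_card] at h3 hlt
        omega
      have hsum0 : ∑ i : Fin n, x i.castSucc = 0 := by
        have h := hxl
        rw [hxlast] at h
        simp only [neg_one_mul] at h
        rw [Finset.sum_neg_distrib] at h
        exact neg_eq_zero.mp h.symm
      exact hw3 (fun i : Fin n => x i.castSucc) hxc (le_antisymm (le_trans hcardle (by omega)) h3) hsum0
  -- sets of weights are nonempty; conclude
  have hne1 : {w | ∃ c ∈ C, c ≠ 0 ∧ hammingNorm c = w}.Nonempty := by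
    obtain ⟨c, hc, hc0⟩ := hex
    exact ⟨_, c, hc, hc0, rfl⟩
  have part1 : 3 ≤ minDist C := by
    obtain ⟨c, hc, hc0, hcw⟩ := Nat.sInf_mem hne1
    unfold minDist
    rw [← hcw]
    exact hw2 c hc hc0
  -- a nonzero extended codeword built from a nonzero codeword
  have hextmem : ∀ c : Fin n → F, c ∈ C →
      Fin.snoc c (∑ i, (-1 : F) * c i) ∈ extCode C (fun _ => -1) := by
    intro c hc
    rw [mem_extCode]
    constructor
    · simpa [Fin.snoc_castSucc] using hc
    · simp [Fin.snoc_last, Fin.snoc_castSucc]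
  have hextne : ∀ c : Fin n → F, c ≠ 0 → (Fin.snoc c (∑ i, (-1 : F) * c i) : Fin (n+1) → F) ≠ 0 := by
    intro c hc0 h
    apply hc0
    funext i
    have := congrFun h i.castSucc
    simpa [Fin.snoc_castSucc] using this
  have hne2 : {w | ∃ x ∈ extCode C (fun _ => -1), x ≠ 0 ∧ hammingNorm x = w}.Nonempty := by
    obtain ⟨c, hc, hc0⟩ := hex
    exact ⟨_, _, hextmem c hc, hextne c hc0, rfl⟩
  have part2 : 4 ≤ minDist (extCode C (fun _ => -1)) := by
    obtain ⟨x, hx, hx0, hxw⟩ := Nat.sInf_mem hne2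
    unfold minDist
    rw [← hxw]
    exact hwx x hx hx0
  refine ⟨part1, part2, ?_⟩
  intro hd3
  obtain ⟨c, hc, hc0, hcw'⟩ := Nat.sInf_mem hne1
  have hcw : hammingNorm c = 3 := hcw'.trans hd3
  set x : Fin (n+1) → F := Fin.snoc c (∑ i, (-1 : F) * c i) with hxdef
  have hxw4 : hammingNorm x ≤ 4 := by
    have hsub : Finset.univ.filter (fun i => x i ≠ 0) ⊆
        insert (Fin.last n) ((Finset.univ.filter fun i => c i ≠ 0).image Fin.castSucc) := by
      intro a ha
      have ha' : x a ≠ 0 := (Finset.mem_filter.mp ha).2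
      refine Fin.lastCases ?_ ?_ a ha'
      · intro _
        exact Finset.mem_insert_self _ _
      · intro j hj
        apply Finset.mem_insert_of_mem
        simp only [Finset.mem_image, Finset.mem_filter]
        refine ⟨j, ⟨Finset.mem_univ _, ?_⟩, rfl⟩
        simpa [hxdef, Fin.snoc_castSucc] using hj
    have h1 := Finset.card_le_card hsub
    have h2 := Finset.card_insert_le (Fin.last n)
      ((Finset.univ.filter fun i => c i ≠ 0).image Fin.castSucc)
    have h3 := Finset.card_image_le (f := Fin.castSucc)
      (s := Finset.univ.filter fun i => c i ≠ 0)
    rw [hammingNorm_eq_card]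
    have hc3 : (Finset.univ.filter fun i => c i ≠ 0).card = 3 :=
      (hammingNorm_eq_card c).symm.trans hcw
    omega
  have hmemw : hammingNorm x ∈ {w | ∃ x ∈ extCode C (fun _ => -1), x ≠ 0 ∧ hammingNorm x = w} :=
    ⟨x, hextmem c hc, hextne c hc0, rfl⟩
  have := Nat.sInf_le hmemw
  exact le_antisymm (le_trans this hxw4) part2
end

section
/- Let n > 2 with gcd(q,n) = 1, m = ord_n(q), α ∈ GF(q^m) a primitive n-th root of unity, and 2 ≤ δ < n. Let C be the narrow-sense BCH code of length n over GF(q) with generator polynomial lcm(M_α(x), M_{α^2}(x), ..., M_{α^{δ-1}}(x)). Then d(C̄(-1)) ≥ δ + 1, and if d(C) = δ then d(C̄(-1)) = δ + 1. Furthermore, if q^i ≡ -1 (mod n) for some integer i and d(C) ≤ 2δ - 1, then d(C̄(-1)) = d(C) + 1. -/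
open Finset

variable {F : Type*} [Field F] [Fintype F] [DecidableEq F]

set_option linter.unusedSectionVars false

section BCHAux

variable {F K : Type*} [Field F] [Fintype F] [DecidableEq F] [Field K] [Algebra F K]

lemma bch_vanish {n : ℕ} {α : K} (hα : IsPrimitiveRoot α n)
    (c : Fin n → F) (e r : ℕ)
    (H : ∀ t, t < r → ∑ j, algebraMap F K (c j) * (α ^ (e + t)) ^ (j : ℕ) = 0)
    (hw : hammingNorm c ≤ r) : c = 0 := by
  classical
  set S : Finset (Fin n) := Finset.univ.filter (fun j => c j ≠ 0) with hS
  have hcard : S.card = hammingNorm c := rfl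
  set k := S.card with hk
  let σ : S ≃ Fin k := S.equivFin
  let τ : Fin k → Fin n := fun b => (σ.symm b : Fin n)
  have hτinj : Function.Injective τ := fun a b hab => σ.symm.injective (Subtype.ext hab)
  let v : Fin k → K := fun b => α ^ ((τ b : ℕ))
  have hvinj : Function.Injective v := by
    intro a b hab
    exact hτinj (Fin.ext (hα.pow_inj (τ a).isLt (τ b).isLt hab))
  let d : Fin k → K := fun b => algebraMap F K (c (τ b)) * α ^ (e * (τ b : ℕ))
  have hsys : ∀ t : Fin k, ∑ b, d b * v b ^ (t : ℕ) = 0 := by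
    intro t
    have htr : (t : ℕ) < r := lt_of_lt_of_le t.isLt (hcard ▸ hw)
    have ht := H t htr
    have hsum : ∑ j ∈ S, algebraMap F K (c j) * (α ^ (e + (t : ℕ))) ^ (j : ℕ) = 0 := by
      rw [← ht]
      apply Finset.sum_subset (Finset.subset_univ S)
      intro j _ hj
      have hc0 : c j = 0 := by
        by_contra hcj
        exact hj (Finset.mem_filter.mpr ⟨Finset.mem_univ j, hcj⟩)
      simp [hc0]
    have hterm : ∀ j : Fin n,
        algebraMap F K (c j) * α ^ (e * (j : ℕ)) * (α ^ ((j : ℕ))) ^ (t : ℕ)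
          = algebraMap F K (c j) * (α ^ (e + (t : ℕ))) ^ (j : ℕ) := by
      intro j
      rw [mul_assoc, ← pow_mul, ← pow_mul, ← pow_add]
      have hexp : e * (j : ℕ) + (j : ℕ) * (t : ℕ) = (e + (t : ℕ)) * (j : ℕ) := by ring
      rw [hexp]
    calc ∑ b, d b * v b ^ (t : ℕ)
        = ∑ x : S, algebraMap F K (c (x : Fin n)) * (α ^ (e + (t : ℕ))) ^ ((x : Fin n) : ℕ) := by
          refine Fintype.sum_equiv σ.symm _ _ fun b => ?_
          exact hterm (τ b)
      _ = ∑ j ∈ S, algebraMap F K (c j) * (α ^ (e + (t : ℕ))) ^ (j : ℕ) :=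
          Finset.sum_coe_sort S (fun j => algebraMap F K (c j) * (α ^ (e + (t : ℕ))) ^ (j : ℕ))
      _ = 0 := hsum
  have hd0 : d = 0 :=
    Matrix.eq_zero_of_forall_pow_sum_mul_pow_eq_zero hvinj hsys
  funext j
  by_contra hcj
  have hjS : j ∈ S := Finset.mem_filter.mpr ⟨Finset.mem_univ j, hcj⟩
  have hdz : algebraMap F K (c (τ (σ ⟨j, hjS⟩))) * α ^ (e * ((τ (σ ⟨j, hjS⟩)) : ℕ)) = 0 := by
    have := congrFun hd0 (σ ⟨j, hjS⟩); exact this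
  have hτj : τ (σ ⟨j, hjS⟩) = j := by simp [τ]
  rw [hτj] at hdz
  rcases mul_eq_zero.mp hdz with h | h
  · exact hcj ((map_eq_zero _).mp h)
  · exact pow_ne_zero _ (hα.ne_zero j.pos.ne') h

lemma conj_vanish {q n : ℕ} (hF : Fintype.card F = q) (c : Fin n → F) (β : K)
    (h : ∑ j, algebraMap F K (c j) * β ^ (j : ℕ) = 0) (l : ℕ) :
    ∑ j, algebraMap F K (c j) * (β ^ q ^ l) ^ (j : ℕ) = 0 := by
  classical
  obtain ⟨p, -, a, hp, hq⟩ := FiniteField.card' (K := F)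
  rw [hF] at hq
  haveI : Fact p.Prime := ⟨hp⟩
  haveI : CharP F p := by
    have hP : CharP F (ringChar F) := ringChar.charP F
    have hpr : (ringChar F).Prime := CharP.char_is_prime F (ringChar F)
    have hdvd : ringChar F ∣ p ^ (a : ℕ) := by
      rw [← hq, ← hF]
      exact (CharP.cast_eq_zero_iff F (ringChar F) _).mp (FiniteField.cast_card_eq_zero F)
    have heq : ringChar F = p :=
      (Nat.prime_dvd_prime_iff_eq hpr hp).mp (hpr.dvd_of_dvd_pow hdvd)
    rw [← heq]; exact hP
  haveI : CharP K p := charP_of_injective_algebraMap (algebraMap F K).injective p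
  induction l with
  | zero => simpa using h
  | succ l ih =>
    have step : ∀ (γ : K), (∑ j, algebraMap F K (c j) * γ ^ (j : ℕ) = 0) →
        ∑ j, algebraMap F K (c j) * (γ ^ q) ^ (j : ℕ) = 0 := by
      intro γ hγ
      have h2 := congrArg (iterateFrobenius K p a) hγ
      rw [map_sum, map_zero] at h2
      rw [← h2]
      refine Finset.sum_congr rfl fun j _ => ?_
      rw [map_mul, map_pow, iterateFrobenius_def, iterateFrobenius_def, ← hq]
      congr 2
      rw [← map_pow, ← hF, FiniteField.pow_card]
    have h3 := step _ ih
    rwa [← pow_mul, ← pow_succ] at h3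

lemma hammingNorm_snoc {n : ℕ} (c : Fin n → F) (a : F) :
    hammingNorm (Fin.snoc c a : Fin (n + 1) → F)
      = hammingNorm c + if a = 0 then 0 else 1 := by
  classical
  unfold hammingNorm
  rw [Finset.card_filter, Finset.card_filter, Fin.sum_univ_castSucc]
  simp only [Fin.snoc_castSucc, Fin.snoc_last]
  by_cases h : a = 0 <;> simp [h]

lemma snoc_ne_zero {n : ℕ} {c : Fin n → F} (hc : c ≠ 0) (a : F) :
    (Fin.snoc c a : Fin (n + 1) → F) ≠ 0 := by
  intro h
  apply hc
  funext i
  have := congrFun h i.castSucc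
  simpa [Fin.snoc_castSucc] using this

end BCHAux

/-- for the narrow-sense BCH code of length `n` and designed
distance `δ` (the words vanishing at `α, α², …, α^{δ-1}`), one has
`d(C̄(-1)) ≥ δ+1`, `d(C)=δ → d(C̄(-1))=δ+1`, and if `q^i ≡ -1 (mod n)` for some `i`
and `d(C) ≤ 2δ-1` then `d(C̄(-1)) = d(C)+1`. -/
theorem stmt10 {F K : Type*} [Field F] [Fintype F] [DecidableEq F]
    [Field K] [Fintype K] [Algebra F K]
    (q m n δ : ℕ) (hF : Fintype.card F = q)
    (hn2 : 2 < n) (hco : Nat.Coprime q n)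
    (hK : Fintype.card K = q ^ m)
    (hord : n ∣ q ^ m - 1) (hordmin : ∀ l, 0 < l → n ∣ q ^ l - 1 → m ≤ l)
    (hδ : 2 ≤ δ) (hδn : δ < n)
    (α : K) (hα : IsPrimitiveRoot α n)
    (C : Submodule F (Fin n → F))
    (hC : ∀ c, c ∈ C ↔ ∀ i : ℕ, 1 ≤ i → i ≤ δ - 1 →
      ∑ j, algebraMap F K (c j) * (α ^ i) ^ (j : ℕ) = 0) :
    δ + 1 ≤ minDist (extCode C (fun _ => -1)) ∧
    (minDist C = δ → minDist (extCode C (fun _ => -1)) = δ + 1) ∧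
    ((∃ i : ℕ, (q : ZMod n) ^ i = -1) → minDist C ≤ 2 * δ - 1 →
      minDist (extCode C (fun _ => -1)) = minDist C + 1) := by
  classical
  have hn0 : 0 < n := by omega
  set u : Fin n → F := fun _ => (-1 : F) with hu
  -- basic root facts
  have hroot : ∀ c ∈ C, ∀ s : ℕ, 1 ≤ s → s ≤ δ - 1 →
      ∑ j, algebraMap F K (c j) * (α ^ s) ^ (j : ℕ) = 0 :=
    fun c hc s h1 h2 => (hC c).mp hc s h1 h2
  have hpowc : ∀ a b : ℕ, ((a : ZMod n) = (b : ZMod n)) → α ^ a = α ^ b := by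
    intro a b hab
    have hmod : a % n = b % n := (ZMod.natCast_eq_natCast_iff' a b n).mp hab
    have key : ∀ x : ℕ, α ^ x = α ^ (x % n) := by
      intro x
      conv_lhs => rw [← Nat.div_add_mod x n]
      rw [pow_add, pow_mul, hα.pow_eq_one, one_pow, one_mul]
    rw [key a, key b, hmod]
  -- weight bounds
  have hvanish1 : ∀ c ∈ C, c ≠ 0 → δ ≤ hammingNorm c := by
    intro c hc hc0
    by_contra hlt
    push_neg at hlt
    apply hc0
    apply bch_vanish hα c 1 (δ - 1) ?_ (by omega)
    intro t ht
    exact hroot c hc (1 + t) (by omega) (by omega)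
  have hvanish2 : ∀ c ∈ C, (∑ i, c i) = 0 → c ≠ 0 → δ + 1 ≤ hammingNorm c := by
    intro c hc hsum hc0
    by_contra hlt
    push_neg at hlt
    apply hc0
    apply bch_vanish hα c 0 δ ?_ (by omega)
    intro t ht
    rcases Nat.eq_zero_or_pos t with rfl | htpos
    · have h0 : ∑ j, algebraMap F K (c j) = 0 := by rw [← map_sum, hsum, map_zero]
      simpa using h0
    · have := hroot c hc t (by omega) (by omega)
      simpa [zero_add] using this
  -- all-ones codeword
  have hone : (fun _ => (1 : F)) ∈ C := by
    rw [hC]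
    intro i h1 h2
    have hne : α ^ i ≠ 1 := hα.pow_ne_one_of_pos_of_lt (by omega) (by omega)
    have hgeom := geom_sum_mul (α ^ i) n
    have hn1 : (α ^ i) ^ n = 1 := by
      rw [← pow_mul, mul_comm, pow_mul, hα.pow_eq_one, one_pow]
    rw [hn1, sub_self] at hgeom
    have hz : (∑ j ∈ Finset.range n, (α ^ i) ^ j) = 0 :=
      (mul_eq_zero.mp hgeom).resolve_right (sub_ne_zero.mpr hne)
    simp only [map_one, one_mul]
    rw [Fin.sum_univ_eq_sum_range (fun j => (α ^ i) ^ j) n]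
    exact hz
  have hone0 : (fun _ => (1 : F)) ≠ (0 : Fin n → F) := by
    intro h
    have := congrFun h ⟨0, hn0⟩
    simp at this
  -- sets
  have hCset : {w | ∃ c ∈ C, c ≠ 0 ∧ hammingNorm c = w}.Nonempty :=
    ⟨_, (fun _ => (1 : F)), hone, hone0, rfl⟩
  -- extension membership
  have memext : ∀ (c : Fin n → F), c ∈ C →
      (Fin.snoc c (∑ i, u i * c i) : Fin (n + 1) → F) ∈ extCode C u := by
    intro c hc
    have h1 : (fun i : Fin n => (Fin.snoc c (∑ i, u i * c i) : Fin (n + 1) → F) i.castSucc) = c := by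
      funext i; simp [Fin.snoc_castSucc]
    refine ⟨?_, ?_⟩
    · rw [h1]; exact hc
    · simp only [Fin.snoc_last, Fin.snoc_castSucc]
  have hEset : {w | ∃ x ∈ extCode C u, x ≠ 0 ∧ hammingNorm x = w}.Nonempty := by
    refine ⟨_, _, memext (fun _ => 1) hone, snoc_ne_zero hone0 _, rfl⟩
  -- generic lower bound for extended code
  have extlb : ∀ (b : ℕ),
      (∀ c ∈ C, c ≠ 0 → (∑ i, c i) = 0 → b + 1 ≤ hammingNorm c) →
      (∀ c ∈ C, c ≠ 0 → b ≤ hammingNorm c) →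
      ∀ x ∈ extCode C u, x ≠ 0 → b + 1 ≤ hammingNorm x := by
    intro b hz hnz x hx hx0
    obtain ⟨hxC, hxlast⟩ := hx
    set c : Fin n → F := fun i => x (Fin.castSucc i) with hcdef
    have hxs : x = Fin.snoc c (x (Fin.last n)) := (Fin.snoc_init_self x).symm
    have hc0 : c ≠ 0 := by
      intro h
      apply hx0
      have hlast0 : x (Fin.last n) = 0 := by
        rw [hxlast]
        simp only [hu]
        have : ∀ i : Fin n, x (Fin.castSucc i) = 0 := fun i => congrFun h i
        simp [this]
      rw [hxs, hlast0, h]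
      funext i
      refine Fin.lastCases ?_ ?_ i
      · simp [Fin.snoc_last]
      · intro j; simp [Fin.snoc_castSucc]
    have hwt : hammingNorm x = hammingNorm c + if x (Fin.last n) = 0 then 0 else 1 := by
      conv_lhs => rw [hxs]
      exact hammingNorm_snoc c (x (Fin.last n))
    by_cases hlast : x (Fin.last n) = 0
    · have hsum : (∑ i, c i) = 0 := by
        have h2 := hxlast
        rw [hlast] at h2
        have h3 : (0 : F) = -∑ i, c i := by
          rw [h2]; simp [hu, neg_mul, Finset.sum_neg_distrib]; rfl
        have := h3.symm
        rwa [neg_eq_zero] at this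
      have := hz c hxC hc0 hsum
      rw [hwt, if_pos hlast]
      omega
    · have := hnz c hxC hc0
      rw [hwt, if_neg hlast]
      omega
  -- part 1
  have part1 : δ + 1 ≤ minDist (extCode C u) := by
    refine le_csInf hEset ?_
    rintro w ⟨x, hx, hx0, rfl⟩
    exact extlb δ (fun c hc h0 hs => hvanish2 c hc hs h0) hvanish1 x hx hx0
  refine ⟨part1, ?_, ?_⟩
  · -- part 2
    intro hmd
    have hmem : minDist C ∈ {w | ∃ c ∈ C, c ≠ 0 ∧ hammingNorm c = w} := Nat.sInf_mem hCset
    rw [hmd] at hmem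
    obtain ⟨c, hcC, hc0, hcw⟩ := hmem
    have hsne : (∑ i, c i) ≠ 0 := by
      intro hs
      have := hvanish2 c hcC hs hc0
      omega
    have hlastne : (∑ i, u i * c i) ≠ 0 := by
      simp only [hu, neg_mul, one_mul, Finset.sum_neg_distrib, neg_eq_zero]
      simpa using hsne
    have hxw : hammingNorm (Fin.snoc c (∑ i, u i * c i) : Fin (n + 1) → F) = δ + 1 := by
      rw [hammingNorm_snoc, if_neg hlastne, hcw]
    have hle : minDist (extCode C u) ≤ δ + 1 :=
      Nat.sInf_le ⟨_, memext c hcC, snoc_ne_zero hc0 _, hxw⟩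
    omega
  · -- part 3
    intro hneg hd2
    obtain ⟨i0, hi0⟩ := hneg
    -- conjugate roots
    have hnegroot : ∀ c ∈ C, ∀ s : ℕ, 1 ≤ s → s ≤ δ - 1 →
        ∑ j, algebraMap F K (c j) * (α ^ (n - s)) ^ (j : ℕ) = 0 := by
      intro c hc s h1 h2
      have h := conj_vanish hF c (α ^ s) (hroot c hc s h1 h2) i0
      have hb : (α ^ s) ^ q ^ i0 = α ^ (n - s) := by
        rw [← pow_mul]
        apply hpowc
        have hsn : s ≤ n := by omega
        rw [Nat.cast_sub hsn, ZMod.natCast_self, zero_sub, Nat.cast_mul, Nat.cast_pow, hi0]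
        ring
      rwa [hb] at h
    have hvanish3 : ∀ c ∈ C, (∑ i, c i) = 0 → c ≠ 0 → 2 * δ ≤ hammingNorm c := by
      intro c hc hsum hc0
      by_contra hlt
      push_neg at hlt
      apply hc0
      apply bch_vanish hα c (n - δ + 1) (2 * δ - 1) ?_ (by omega)
      intro t ht
      rcases lt_trichotomy (n - δ + 1 + t) n with h1 | h2 | h3
      · have := hnegroot c hc (n - (n - δ + 1 + t)) (by omega) (by omega)
        have he : n - (n - (n - δ + 1 + t)) = n - δ + 1 + t := by omega
        rwa [he] at this
      · rw [h2, hα.pow_eq_one]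
        simp only [one_pow, mul_one]
        rw [← map_sum, hsum, map_zero]
      · have hb : α ^ (n - δ + 1 + t) = α ^ (n - δ + 1 + t - n) := by
          have he : n - δ + 1 + t = (n - δ + 1 + t - n) + n := by omega
          conv_lhs => rw [he]
          rw [pow_add, hα.pow_eq_one, mul_one]
        rw [hb]
        exact hroot c hc (n - δ + 1 + t - n) (by omega) (by omega)
    have hmem : minDist C ∈ {w | ∃ c ∈ C, c ≠ 0 ∧ hammingNorm c = w} := Nat.sInf_mem hCset
    obtain ⟨c, hcC, hc0, hcw⟩ := hmem
    have hdge : δ ≤ minDist C := by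
      have := hvanish1 c hcC hc0; omega
    have hsne : (∑ i, c i) ≠ 0 := by
      intro hs
      have := hvanish3 c hcC hs hc0
      omega
    have hlastne : (∑ i, u i * c i) ≠ 0 := by
      simp only [hu, neg_mul, one_mul, Finset.sum_neg_distrib, neg_eq_zero]
      simpa using hsne
    have hxw : hammingNorm (Fin.snoc c (∑ i, u i * c i) : Fin (n + 1) → F) = minDist C + 1 := by
      rw [hammingNorm_snoc, if_neg hlastne, hcw]
    have hle : minDist (extCode C u) ≤ minDist C + 1 :=
      Nat.sInf_le ⟨_, memext c hcC, snoc_ne_zero hc0 _, hxw⟩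
    have hge : minDist C + 1 ≤ minDist (extCode C u) := by
      refine le_csInf hEset ?_
      rintro w ⟨x, hx, hx0, rfl⟩
      refine extlb (minDist C) ?_ ?_ x hx hx0
      · intro c' hc' h0' hs'
        have := hvanish3 c' hc' hs' h0'
        omega
      · intro c' hc' h0'
        exact Nat.sInf_le ⟨c', hc', h0', rfl⟩
    omega
end
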